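/- arXiv:2305.04885 — 3 statements merged into one kernel-verified Lean document; each statement's English description precedes it below -/
import Mathlib

section
/- Under the hypotheses of the two preceding statements (nonnegative lateral coordination functions, lane bounds $y_{min} \leq y_{max}$, and unboundedness below in $x_E$), the intersection $\mathcal{C} = \bigcap_{k=1}^{7}\{\bm{x} : b_k(\bm{x}) \geq 0\}$ of all seven barrier-function superlevel sets is nonempty: any state with $y_E \in [y_{min}, y_{max}]$ and $x_E$ sufficiently small lies in $\mathcal{C}$. -/
/-- The intersection `𝒞 = ⋂_{k=1}^{7} {b_k ≥ 0}` of all seven barrier-function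
superlevel sets is nonempty: any state with `y_E ∈ [y_min, y_max]` and `x_E`
sufficiently small lies in `𝒞`. -/
theorem safe_set_nonempty
    (τD vE w ymin ymax : ℝ) (hτ : 0 < τD) (hv : 0 ≤ vE) (hw : 0 < w)
    (hy : ymin ≤ ymax)
    (x0F xm1F xp1F xm1B xp1B vm1B vp1B ym1F yp1F : ℝ)
    (lam σ : ℝ → ℝ) (θ : ℝ → ℝ → ℝ → ℝ) (ρ : ℝ → ℝ → ℝ)
    (hlam : ∀ s, 0 ≤ lam s)
    (hσbdd : ∃ M : ℝ, ∀ r, |σ r| ≤ M) :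
    ∃ X : ℝ, ∀ xE yE : ℝ, xE ≤ X → yE ∈ Set.Icc ymin ymax →
      0 ≤ x0F - xE - τD * vE ∧
      0 ≤ yE - ymin + w * lam (θ xE xm1B vm1B) ∧
      0 ≤ yE - ymin + w * lam (θ xm1F xE vE) ∧
      0 ≤ w * lam (θ xE xp1B vp1B) + ymax - yE ∧
      0 ≤ w * lam (θ xp1F xE vE) + ymax - yE ∧
      0 ≤ xm1F - xE - τD * vE * σ (ρ yE ym1F) ∧
      0 ≤ xp1F - xE - τD * vE * σ (ρ yp1F yE) := by
  obtain ⟨M, hM⟩ := hσbdd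
  refine ⟨min (x0F - τD * vE) (min (xm1F - τD * vE * M) (xp1F - τD * vE * M)),
    fun xE yE hx hyE => ?_⟩
  obtain ⟨hy1, hy2⟩ := hyE
  have htv : 0 ≤ τD * vE := mul_nonneg hτ.le hv
  have h1 : xE ≤ x0F - τD * vE := le_trans hx (min_le_left _ _)
  have h2 : xE ≤ xm1F - τD * vE * M :=
    le_trans hx (le_trans (min_le_right _ _) (min_le_left _ _))
  have h3 : xE ≤ xp1F - τD * vE * M :=
    le_trans hx (le_trans (min_le_right _ _) (min_le_right _ _))
  have hσ1 : τD * vE * σ (ρ yE ym1F) ≤ τD * vE * M :=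
    mul_le_mul_of_nonneg_left (le_trans (le_abs_self _) (hM _)) htv
  have hσ2 : τD * vE * σ (ρ yp1F yE) ≤ τD * vE * M :=
    mul_le_mul_of_nonneg_left (le_trans (le_abs_self _) (hM _)) htv
  refine ⟨by linarith, ?_, ?_, ?_, ?_, by linarith, by linarith⟩
  · have := mul_nonneg hw.le (hlam (θ xE xm1B vm1B)); linarith
  · have := mul_nonneg hw.le (hlam (θ xm1F xE vE)); linarith
  · have := mul_nonneg hw.le (hlam (θ xE xp1B vp1B)); linarith
  · have := mul_nonneg hw.le (hlam (θ xp1F xE vE)); linarith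
end

section
/- Assume $\lambda$ satisfies property (λ2): $\theta = 0.9 \Rightarrow \lambda(\theta) = 0.5$ and $\lambda$ is increasing; assume $\sigma$ satisfies property (σ2): $\rho \geq 0.5 \Rightarrow \sigma(\rho) \geq 0.9$. Let the ego-vehicle be at $y_E = y_{max}^{\ell} = w\ell + w/2 - \epsilon$ with $\epsilon = 0$, and the front-left neighbor at $y_{+1F} = (\ell+1)w$, so $\rho(y_{+1F}, y_E) = (y_{+1F}-y_E)/w = 1/2$. If additionally $b_7(\bm{x}) = x_{+1F} - x_E - \tau_D v_E \sigma(\rho(y_{+1F},y_E)) \geq 0$ with $\tau_D, v_E > 0$, then $x_{+1F} - x_E \geq 0.9\, \tau_D v_E$, hence $\theta(x_{+1F}, x_E, v_E) = (x_{+1F}-x_E)/(\tau_D v_E) \geq 0.9$ and $\lambda(\theta(x_{+1F},x_E,v_E)) \geq 0.5$, so that $b_5(\bm{x}) = w\lambda(\theta(x_{+1F},x_E,v_E)) + y_{max}^{\ell} - y_E \geq w/2$. In particular, every lateral position $y \in [y_{max}^{\ell}, y_{max}^{\ell} + w/2]$ satisfies $w\lambda + y_{max}^{\ell} - y \geq 0$.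 -/
/-- Coordination principle: if the ego-vehicle is at the top edge of lane `ℓ`
(`y_E = y_max^ℓ = wℓ + w/2`, with `ε = 0`), the front-left neighbor is at the
center of lane `ℓ+1` (`y_{+1F} = (ℓ+1)w`), and the barrier `b₇ ≥ 0` holds, then
`x_{+1F} - x_E ≥ 0.9 τ_D v_E`, hence `θ ≥ 0.9`, `λ(θ) ≥ 0.5`, so
`b₅ ≥ w/2`; in particular every `y ∈ [y_max^ℓ, y_max^ℓ + w/2]` satisfies
`wλ + y_max^ℓ - y ≥ 0`. -/
theorem coordination_principle
    (w τD vE : ℝ) (ℓ : ℝ) (hw : 0 < w) (hτ : 0 < τD) (hv : 0 < vE)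
    (lam σ : ℝ → ℝ)
    -- property (λ2): λ(0.9) = 0.5 and λ increasing
    (hlam09 : lam 0.9 = 0.5) (hlammono : Monotone lam)
    -- property (σ2): ρ ≥ 0.5 ⟹ σ(ρ) ≥ 0.9
    (hσ2 : ∀ r : ℝ, 0.5 ≤ r → 0.9 ≤ σ r)
    (yE yp1F ymax xE xp1F : ℝ)
    (hymax : ymax = w * ℓ + w / 2) (hyE : yE = ymax)
    (hyp1F : yp1F = (ℓ + 1) * w)
    -- barrier b₇ ≥ 0, with ρ(y_{+1F}, y_E) = (y_{+1F} - y_E)/w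
    (hb7 : 0 ≤ xp1F - xE - τD * vE * σ ((yp1F - yE) / w)) :
    (yp1F - yE) / w = 1 / 2 ∧
    0.9 * (τD * vE) ≤ xp1F - xE ∧
    0.9 ≤ (xp1F - xE) / (τD * vE) ∧
    0.5 ≤ lam ((xp1F - xE) / (τD * vE)) ∧
    w / 2 ≤ w * lam ((xp1F - xE) / (τD * vE)) + ymax - yE ∧
    ∀ y ∈ Set.Icc ymax (ymax + w / 2),
      0 ≤ w * lam ((xp1F - xE) / (τD * vE)) + ymax - y := by
  have hrho : (yp1F - yE) / w = 1 / 2 := by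
    subst hyp1F hyE hymax; field_simp; ring
  have hs : 0.9 ≤ σ ((yp1F - yE) / w) := hσ2 _ (by rw [hrho]; norm_num)
  have hτv : 0 < τD * vE := mul_pos hτ hv
  have h2 : 0.9 * (τD * vE) ≤ xp1F - xE := by nlinarith
  have h3 : 0.9 ≤ (xp1F - xE) / (τD * vE) := by
    rw [le_div_iff₀ hτv]; linarith
  have h4 : 0.5 ≤ lam ((xp1F - xE) / (τD * vE)) := hlam09 ▸ hlammono h3
  refine ⟨hrho, h2, h3, h4, by rw [hyE]; nlinarith, ?_⟩
  rintro y ⟨h5, h6⟩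
  nlinarith
end

section
/- Let $\psi_0(t) = b(t)$ and $\psi_1(t) = \dot{\psi}_0(t) + \gamma_1(\psi_0(t))$, where $\gamma_1$ is a locally Lipschitz extended class-$\mathcal{K}$ function. Suppose along a trajectory $\psi_1(t) \geq 0$ for all $t \geq 0$ (i.e., $\dot{b}(t) \geq -\gamma_1(b(t))$) and $b(0) \geq 0$, $\dot{b}(0) + \gamma_1(b(0)) \geq 0$. Then both $b(t) \geq 0$ and $\dot{b}(t) + \gamma_1(b(t)) \geq 0$ for all $t \geq 0$; i.e., the trajectory remains in $\mathcal{C}_1 \cap \mathcal{C}_2$. -/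
lemma nonneg_of_hasDerivAt_ge_neg_classK (f f' γ : ℝ → ℝ)
    (hγmono : StrictMono γ) (hγ0 : γ 0 = 0)
    (hf : ∀ t : ℝ, 0 ≤ t → HasDerivAt f (f' t) t)
    (hineq : ∀ t : ℝ, 0 ≤ t → f' t ≥ -γ (f t)) (h0 : 0 ≤ f 0) :
    ∀ t : ℝ, 0 ≤ t → 0 ≤ f t := by
  intro t0 ht0
  by_contra h
  push_neg at h
  have ht0' : 0 < t0 := by
    rcases eq_or_lt_of_le ht0 with rfl | h'
    · linarith
    · exact h'
  have fcont : ContinuousOn f (Set.Icc 0 t0) := fun x hx =>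
    ((hf x hx.1).continuousAt).continuousWithinAt
  set S : Set ℝ := Set.Icc 0 t0 ∩ f ⁻¹' Set.Ici 0 with hS
  have hScl : IsClosed S :=
    fcont.preimage_isClosed_of_isClosed isClosed_Icc isClosed_Ici
  have h0S : (0 : ℝ) ∈ S := ⟨⟨le_refl 0, ht0⟩, h0⟩
  have hbdd : BddAbove S := ⟨t0, fun x hx => hx.1.2⟩
  set s := sSup S with hs
  have hsS : s ∈ S := hScl.csSup_mem ⟨0, h0S⟩ hbdd
  have hs0 : 0 ≤ s := hsS.1.1
  have hfs : 0 ≤ f s := hsS.2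
  have hst0 : s < t0 := by
    rcases eq_or_lt_of_le hsS.1.2 with h' | h'
    · exfalso; rw [h'] at hfs; linarith
    · exact h'
  have hneg : ∀ x ∈ Set.Ioc s t0, f x < 0 := by
    intro x hx
    by_contra hc
    push_neg at hc
    have : x ∈ S := ⟨⟨le_trans hs0 hx.1.le, hx.2⟩, hc⟩
    exact absurd (le_csSup hbdd this) (not_le.mpr hx.1)
  have hmono : MonotoneOn f (Set.Icc s t0) := by
    apply monotoneOn_of_deriv_nonneg (convex_Icc s t0)
    · exact fcont.mono (Set.Icc_subset_Icc hs0 le_rfl)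
    · intro x hx
      rw [interior_Icc] at hx
      exact ((hf x (le_trans hs0 hx.1.le)).differentiableAt).differentiableWithinAt
    · intro x hx
      rw [interior_Icc] at hx
      have hx0 : 0 ≤ x := le_trans hs0 hx.1.le
      rw [(hf x hx0).deriv]
      have hfx : f x < 0 := hneg x ⟨hx.1, hx.2.le⟩
      have : γ (f x) < 0 := by
        have := hγmono hfx
        rwa [hγ0] at this
      linarith [hineq x hx0]
  have := hmono (Set.left_mem_Icc.mpr hst0.le) (Set.right_mem_Icc.mpr hst0.le) hst0.le
  linarith

/-- Order-2 HOCBF invariance: with `ψ₁ = ḃ + γ₁(b)`, if `ψ̇₁ ≥ -γ₂(ψ₁)`,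
`b(0) ≥ 0` and `ψ₁(0) ≥ 0`, then `b(t) ≥ 0` and `ψ₁(t) ≥ 0` for all `t ≥ 0`. -/
theorem hocbf_order_two_invariance
    (b b' ψ1' γ1 γ2 : ℝ → ℝ)
    (hγ1cont : Continuous γ1) (hγ1mono : StrictMono γ1) (hγ10 : γ1 0 = 0)
    (hγ1lip : LocallyLipschitz γ1)
    (hγ2cont : Continuous γ2) (hγ2mono : StrictMono γ2) (hγ20 : γ2 0 = 0)
    (hγ2lip : LocallyLipschitz γ2)
    (hb : ∀ t : ℝ, 0 ≤ t → HasDerivAt b (b' t) t)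
    (hψ1 : ∀ t : ℝ, 0 ≤ t →
      HasDerivAt (fun s => b' s + γ1 (b s)) (ψ1' t) t)
    (hψ1ineq : ∀ t : ℝ, 0 ≤ t → ψ1' t ≥ -γ2 (b' t + γ1 (b t)))
    (hb0 : 0 ≤ b 0) (hψ10 : 0 ≤ b' 0 + γ1 (b 0)) :
    ∀ t : ℝ, 0 ≤ t → 0 ≤ b t ∧ 0 ≤ b' t + γ1 (b t) := by
  have hψpos : ∀ t : ℝ, 0 ≤ t → 0 ≤ b' t + γ1 (b t) :=
    nonneg_of_hasDerivAt_ge_neg_classK (fun s => b' s + γ1 (b s)) ψ1' γ2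
      hγ2mono hγ20 hψ1 hψ1ineq hψ10
  have hbineq : ∀ t : ℝ, 0 ≤ t → b' t ≥ -γ1 (b t) := fun t ht => by
    have := hψpos t ht; linarith
  have hbpos : ∀ t : ℝ, 0 ≤ t → 0 ≤ b t :=
    nonneg_of_hasDerivAt_ge_neg_classK b b' γ1 hγ1mono hγ10 hb hbineq hb0
  exact fun t ht => ⟨hbpos t ht, hψpos t ht⟩
end
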